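/- The (M−1)-dimensional statistic T : X → ℝ^{M−1} itself, given by T(x) = (T_1(x), …, T_{M−1}(x)) with T_i(x) = f_i(x)/Σ_{j=1}^M f_j(x), is Bayes sufficient for the model indicator. In particular, for any model choice problem with M models there exists a Bayes sufficient statistic of dimension M−1. -/

import Mathlib

open MeasureTheory

variable {X : Type*} [MeasurableSpace X]

/-- Posterior probability of model `i` given data `x`, under prior `p`:
`Pr_p(M_i | x) = p i * f i x / ∑ j, p j * f j x`. -/
noncomputable def post (M : ℕ) (f : Fin M → X → ℝ) (p : Fin M → ℝ) (i : Fin M) (x : X) : ℝ :=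
  p i * f i x / ∑ j, p j * f j x

/-- Marginal data distribution `μ_p = ∑ i, p i • μ_i` under prior `p`, where `μ_i` has
density `f i` with respect to `ν`. -/
noncomputable def marg (ν : Measure X) (M : ℕ) (f : Fin M → X → ℝ) (p : Fin M → ℝ) :
    Measure X :=
  ∑ i, ENNReal.ofReal (p i) • ν.withDensity (fun x => ENNReal.ofReal (f i x))

/-- The statistic `T(x) = (T_1(x), …, T_{M-1}(x))` with `T_i(x) = f i x / ∑ j, f j x`,
the posterior model probabilities under the uniform prior (first `M - 1` coordinates). -/
noncomputable def Tstat (M : ℕ) (f : Fin M → X → ℝ) (x : X) (i : Fin (M - 1)) : ℝ :=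
  f (Fin.castLE (Nat.sub_le M 1) i) x / ∑ j, f j x

/-- `p` is a prior over the `M` models. -/
def IsPrior (M : ℕ) (p : Fin M → ℝ) : Prop :=
  (∀ i, 0 ≤ p i) ∧ ∑ i, p i = 1

/-- `S` is Bayes sufficient for the model indicator: for every prior `p` and every model `i`,
the conditional expectation of `Pr_p(M_i | ·)` given `σ(S)` under `μ_p` equals
`Pr_p(M_i | ·)` `μ_p`-almost everywhere. -/
noncomputable def BayesSufficient (ν : Measure X) (M : ℕ) (f : Fin M → X → ℝ)
    {Y : Type*} [MeasurableSpace Y] (S : X → Y) : Prop :=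
  ∀ p : Fin M → ℝ, IsPrior M p → ∀ i : Fin M,
    (marg ν M f p)[post M f p i|MeasurableSpace.comap S inferInstance]
      =ᵐ[marg ν M f p] post M f p i

/-! The posterior `p i * f i x / ∑ j, p j * f j x` does not change when the likelihood vector
`(f j x)_j` is rescaled, so it can be computed from the normalized vector `f j x / ∑ k, f k x`;
that vector sums to one, hence is recovered from its first `M - 1` coordinates `T x`. Thus each
posterior is, `μ_p`-almost everywhere (`μ_p` lives on `{x | 0 < ∑ j, f j x}`), a measurable
function of `T`, and a bounded `σ(T)`-measurable function is its own conditional expectation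
given `σ(T)`. -/

def simplexCompletion (M : ℕ) (t : Fin (M - 1) → ℝ) (j : Fin M) : ℝ :=
  if h : (j : ℕ) < M - 1 then t ⟨j, h⟩ else 1 - ∑ k, t k

theorem measurable_simplexCompletion (M : ℕ) (j : Fin M) :
    Measurable fun t => simplexCompletion M t j := by
  unfold simplexCompletion
  split_ifs <;> fun_prop

theorem simplexCompletion_castLE {M : ℕ} {w : Fin M → ℝ} (hw : ∑ j, w j = 1) :
    simplexCompletion M (fun k => w (Fin.castLE (Nat.sub_le M 1) k)) = w := by
  funext j
  cases M with
  | zero => exact j.elim0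
  | succ n =>
    unfold simplexCompletion
    split_ifs with hj
    · rfl
    · obtain rfl : j = Fin.last n := Fin.ext (by simp only [Fin.val_last]; omega)
      rw [← hw, Fin.sum_univ_castSucc]
      exact add_sub_cancel_left _ _

section Posterior

variable {Ω : Type*} {M : ℕ} {f : Fin M → Ω → ℝ} {p : Fin M → ℝ}

theorem measurable_post [MeasurableSpace Ω] (hf : ∀ j, Measurable (f j)) (p : Fin M → ℝ)
    (i : Fin M) : Measurable (post M f p i) := by
  unfold post
  fun_prop

theorem post_nonneg (hp : ∀ j, 0 ≤ p j) {x : Ω} (hf : ∀ j, 0 ≤ f j x) (i : Fin M) :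
    0 ≤ post M f p i x :=
  div_nonneg (mul_nonneg (hp i) (hf i)) (Finset.sum_nonneg fun j _ => mul_nonneg (hp j) (hf j))

theorem post_le_one (hp : ∀ j, 0 ≤ p j) {x : Ω} (hf : ∀ j, 0 ≤ f j x) (i : Fin M) :
    post M f p i x ≤ 1 :=
  div_le_one_of_le₀
    (Finset.single_le_sum (fun j _ => mul_nonneg (hp j) (hf j)) (Finset.mem_univ i))
    (Finset.sum_nonneg fun j _ => mul_nonneg (hp j) (hf j))

theorem integrable_post [MeasurableSpace Ω] {μ : Measure Ω} [IsFiniteMeasure μ]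
    (hf_meas : ∀ j, Measurable (f j)) (hf_nonneg : ∀ j x, 0 ≤ f j x) (hp : ∀ j, 0 ≤ p j)
    (i : Fin M) : Integrable (post M f p i) μ :=
  .of_bound (measurable_post hf_meas p i).aestronglyMeasurable 1 <| ae_of_all _ fun x => by
    rw [Real.norm_of_nonneg (post_nonneg hp (hf_nonneg · x) i)]
    exact post_le_one hp (hf_nonneg · x) i

theorem post_eq_of_proportional {Y : Type*} {g : Fin M → Y → ℝ} {x : Ω} {y : Y} {c : ℝ}
    (hc : c ≠ 0) (hgf : ∀ j, g j y = c * f j x) (i : Fin M) :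
    post M g p i y = post M f p i x := by
  simp only [post, hgf, mul_left_comm (p _) c, ← Finset.mul_sum]
  exact mul_div_mul_left _ _ hc

theorem simplexCompletion_tstat {x : Ω} (hx : ∑ j, f j x ≠ 0) :
    simplexCompletion M (Tstat M f x) = fun j => f j x / ∑ k, f k x :=
  simplexCompletion_castLE (by rw [← Finset.sum_div, div_self hx])

theorem post_eq_post_simplexCompletion_tstat (p : Fin M → ℝ) (i : Fin M) {x : Ω}
    (hx : ∑ j, f j x ≠ 0) :
    post M f p i x = post M (fun j t => simplexCompletion M t j) p i (Tstat M f x) :=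
  (post_eq_of_proportional (inv_ne_zero hx)
    (fun j => by rw [simplexCompletion_tstat hx]; exact div_eq_inv_mul _ _) i).symm

end Posterior

theorem measurable_tstat {M : ℕ} {f : Fin M → X → ℝ} (hf : ∀ j, Measurable (f j)) :
    Measurable (Tstat M f) := by
  unfold Tstat
  fun_prop

theorem isFiniteMeasure_marg {ν : Measure X} {M : ℕ} {f : Fin M → X → ℝ}
    (hf : ∀ i, Integrable (f i) ν) (p : Fin M → ℝ) : IsFiniteMeasure (marg ν M f p) := by
  have := fun i => isFiniteMeasure_withDensity_ofReal (hf i).2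
  have := fun i => (ν.withDensity fun x => ENNReal.ofReal (f i x)).smul_finite
    (ENNReal.ofReal_ne_top (r := p i))
  unfold marg
  infer_instance

theorem ae_marg_sum_pos {ν : Measure X} {M : ℕ} {f : Fin M → X → ℝ}
    (hf_meas : ∀ i, Measurable (f i)) (hf_nonneg : ∀ i x, 0 ≤ f i x) (p : Fin M → ℝ) :
    ∀ᵐ x ∂marg ν M f p, 0 < ∑ j, f j x := by
  rw [marg, ← Measure.sum_fintype, Measure.ae_sum_iff]
  refine fun i => Measure.ae_smul_measure ?_ _
  refine (ae_withDensity_iff (hf_meas i).ennreal_ofReal).2 (ae_of_all _ fun x hx => ?_)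
  have hfi : 0 < f i x := ENNReal.ofReal_pos.1 (pos_iff_ne_zero.2 hx)
  exact hfi.trans_le (Finset.single_le_sum (fun j _ => hf_nonneg j x) (Finset.mem_univ i))

theorem condExp_comap_ae_eq_of_ae_eq_comp {Y : Type*} [MeasurableSpace Y] {μ : Measure X}
    [IsFiniteMeasure μ] {S : X → Y} (hS : Measurable S) {g : X → ℝ} {φ : Y → ℝ}
    (hφ : Measurable φ) (hg : Integrable g μ) (hgφ : g =ᵐ[μ] φ ∘ S) :
    μ[g|MeasurableSpace.comap S inferInstance] =ᵐ[μ] g :=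
  have := isFiniteMeasure_trim (μ := μ) hS.comap_le
  condExp_of_aestronglyMeasurable' hS.comap_le
    ((hφ.comp (comap_measurable S)).aestronglyMeasurable.congr hgφ.symm) hg

theorem tstat_bayesSufficient_general
    (ν : Measure X) (M : ℕ)
    (f : Fin M → X → ℝ) (hf_meas : ∀ i, Measurable (f i))
    (hf_nonneg : ∀ i x, 0 ≤ f i x) (hf_one : ∀ i, ∫ x, f i x ∂ν = 1) :
    BayesSufficient ν M f (Tstat M f) := by
  intro p hp i
  have hf_int : ∀ j, Integrable (f j) ν := fun j => .of_integral_ne_zero (by simp [hf_one])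
  have := isFiniteMeasure_marg hf_int p
  refine condExp_comap_ae_eq_of_ae_eq_comp (measurable_tstat hf_meas)
    (measurable_post (measurable_simplexCompletion M) p i)
    (integrable_post hf_meas hf_nonneg hp.1 i) ?_
  filter_upwards [ae_marg_sum_pos hf_meas hf_nonneg p] with x hx
  exact post_eq_post_simplexCompletion_tstat p i hx.ne'

/-- The `(M-1)`-dimensional statistic `T : X → ℝ^{M-1}` itself is Bayes sufficient for the
model indicator: every model choice problem with `M` models admits a Bayes sufficient
statistic of dimension `M - 1`. -/
theorem tstat_bayesSufficient
    (ν : Measure X) [SigmaFinite ν] (M : ℕ) (hM : 2 ≤ M)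
    (f : Fin M → X → ℝ) (hf_meas : ∀ i, Measurable (f i))
    (hf_nonneg : ∀ i x, 0 ≤ f i x) (hf_one : ∀ i, ∫ x, f i x ∂ν = 1)
    (hf_pos : ∀ᵐ x ∂ν, 0 < ∑ j, f j x) :
    BayesSufficient ν M f (Tstat M f) :=
  tstat_bayesSufficient_general ν M f hf_meas hf_nonneg hf_one
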